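/- Let A be a finite-dimensional special Z₂-graded Banach algebra over ℝ with identity 1, and let G be a linear ξ-group in A, i.e., a subgroup of the group of units of A such that π₀(g)·G·π₀(g)⁻¹ ⊆ G for every g ∈ G. Then the tangent space T₁(G) is closed under the angle bracket and the square bracket: if X, Y ∈ T₁(G), then X·Y − Y·X ∈ T₁(G) and X·π₀(Y) − π₀(Y)·X ∈ T₁(G). Consequently (T₁(G), +, ⟨·,·⟩, [·,·]) is a right Hu-Liu Leibniz algebra over ℝ. (Proposition 3.1) -/

import Mathlib

/-!
The tangent space `T₁(G)` is a real subspace of `A` (multiply curves pointwise, reparametrise them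
linearly), and it is closed because `A` is finite-dimensional. If `c` is a curve through `1` whose
values normalise `G`, then `t ↦ c t * Y * (c t)⁻¹` stays in `T₁(G)` and has derivative
`c'(0) * Y - Y * c'(0)` at `0`, so this commutator lies in the closed subspace `T₁(G)`. For `c` a
curve in `G` this gives closure under the square bracket. For `c = π₀ ∘ b` with `b` a curve in `G`
it gives `π₀ Y * X - X * π₀ Y ∈ T₁(G)`: `π₀` is a unital ring homomorphism, so the ξ-condition says
exactly that `π₀` maps `G` into its normaliser.

The bracket identities hold on all of `A`: besides Jacobi-type rearrangements they only use that
`π₀` is multiplicative and idempotent and that `(x - π₀ x) * (y - π₀ y) = 0`.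
-/

/-- The tangent space at 1 to a subgroup `G` of the units of a normed algebra `A`:
all derivatives `a'(0)` of curves `a : ℝ → A` that take values in `G`, satisfy
`a 0 = 1`, and are differentiable at `0`. -/
def tangentSpaceAtOne {A : Type*} [NormedRing A] [NormedAlgebra ℝ A]
    (G : Subgroup Aˣ) : Set A :=
  {X : A | ∃ a : ℝ → A, (∀ t : ℝ, ∃ g ∈ G, a t = (g : A)) ∧ a 0 = 1 ∧ HasDerivAt a X 0}

section SpecialGrading

variable {R A : Type*} [Ring R] [Ring A] [Module R A]

structure IsSpecialGrading (A₀ A₁ : Submodule R A) (π₀ : A →ₗ[R] A) : Prop where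
  inf_eq_bot : A₀ ⊓ A₁ = ⊥
  even_mul_even : ∀ a ∈ A₀, ∀ b ∈ A₀, a * b ∈ A₀
  even_mul_odd : ∀ a ∈ A₀, ∀ b ∈ A₁, a * b ∈ A₁
  odd_mul_even : ∀ a ∈ A₁, ∀ b ∈ A₀, a * b ∈ A₁
  odd_mul_odd : ∀ a ∈ A₁, ∀ b ∈ A₁, a * b = 0
  proj_mem : ∀ x, π₀ x ∈ A₀
  sub_proj_mem : ∀ x, x - π₀ x ∈ A₁

def angleBracket (π₀ : A →ₗ[R] A) (x y : A) : A := x * π₀ y - π₀ y * x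

theorem hu_liu_three (π₀ : A →ₗ[R] A) (x y z : A) :
    angleBracket π₀ (x * y - y * x) z + (angleBracket π₀ y z * x - x * angleBracket π₀ y z)
      + (y * angleBracket π₀ x z - angleBracket π₀ x z * y) = 0 := by
  simp only [angleBracket]
  noncomm_ring

namespace IsSpecialGrading

variable {A₀ A₁ : Submodule R A} {π₀ : A →ₗ[R] A}

theorem eq_of_sub_mem_of_sub_mem (hπ : IsSpecialGrading A₀ A₁ π₀) {x y : A}
    (h₀ : x - y ∈ A₀) (h₁ : x - y ∈ A₁) : x = y := by
  have h : x - y ∈ A₀ ⊓ A₁ := ⟨h₀, h₁⟩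
  rwa [hπ.inf_eq_bot, Submodule.mem_bot, sub_eq_zero] at h

theorem proj_proj (hπ : IsSpecialGrading A₀ A₁ π₀) (x : A) : π₀ (π₀ x) = π₀ x :=
  (hπ.eq_of_sub_mem_of_sub_mem (A₀.sub_mem (hπ.proj_mem _) (hπ.proj_mem x))
    (by simpa using A₁.neg_mem (hπ.sub_proj_mem (π₀ x))))

theorem sub_proj_mul_sub_proj (hπ : IsSpecialGrading A₀ A₁ π₀) (x y : A) :
    (x - π₀ x) * (y - π₀ y) = 0 :=
  hπ.odd_mul_odd _ (hπ.sub_proj_mem x) _ (hπ.sub_proj_mem y)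

theorem proj_mul (hπ : IsSpecialGrading A₀ A₁ π₀) (x y : A) :
    π₀ (x * y) = π₀ x * π₀ y := by
  have hodd : x * y - π₀ x * π₀ y ∈ A₁ := by
    have e : x * y - π₀ x * π₀ y =
        (x - π₀ x) * π₀ y + π₀ x * (y - π₀ y) + (x - π₀ x) * (y - π₀ y) := by
      noncomm_ring
    rw [e, hπ.sub_proj_mul_sub_proj, add_zero]
    exact A₁.add_mem (hπ.odd_mul_even _ (hπ.sub_proj_mem x) _ (hπ.proj_mem y))
      (hπ.even_mul_odd _ (hπ.proj_mem x) _ (hπ.sub_proj_mem y))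
  refine hπ.eq_of_sub_mem_of_sub_mem
    (A₀.sub_mem (hπ.proj_mem _) (hπ.even_mul_even _ (hπ.proj_mem x) _ (hπ.proj_mem y))) ?_
  simpa using A₁.sub_mem hodd (hπ.sub_proj_mem (x * y))

theorem proj_one (hπ : IsSpecialGrading A₀ A₁ π₀) : π₀ 1 = 1 := by
  have hsq : π₀ 1 * π₀ 1 = π₀ 1 := by rw [← hπ.proj_mul, one_mul]
  calc π₀ 1 = 1 - (1 - π₀ 1) * (1 - π₀ 1) + (π₀ 1 * π₀ 1 - π₀ 1) := by noncomm_ring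
    _ = 1 := by rw [hπ.sub_proj_mul_sub_proj, hsq, sub_zero, sub_self, add_zero]

def projMonoidHom (hπ : IsSpecialGrading A₀ A₁ π₀) : A →* A where
  toFun := π₀
  map_one' := hπ.proj_one
  map_mul' := hπ.proj_mul

theorem proj_angleBracket (hπ : IsSpecialGrading A₀ A₁ π₀) (x y : A) :
    π₀ (angleBracket π₀ x y) = π₀ x * π₀ y - π₀ y * π₀ x := by
  rw [angleBracket, map_sub, hπ.proj_mul, hπ.proj_mul, hπ.proj_proj]

theorem angleBracket_leibniz (hπ : IsSpecialGrading A₀ A₁ π₀) (x y z : A) :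
    angleBracket π₀ (angleBracket π₀ x y) z =
      angleBracket π₀ x (angleBracket π₀ y z) + angleBracket π₀ (angleBracket π₀ x z) y := by
  simp only [angleBracket, map_sub, hπ.proj_mul, hπ.proj_proj]
  noncomm_ring

theorem angleBracket_commutator (hπ : IsSpecialGrading A₀ A₁ π₀) (x y z : A) :
    angleBracket π₀ x (y * z - z * y) = angleBracket π₀ x (angleBracket π₀ y z) := by
  simp only [angleBracket, map_sub, hπ.proj_mul, hπ.proj_proj]

theorem commutator_eq_angleBracket_of_proj_eq_zero (hπ : IsSpecialGrading A₀ A₁ π₀) {w : A}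
    (hw : π₀ w = 0) (y : A) : w * y - y * w = angleBracket π₀ w y := by
  have hwy := hπ.sub_proj_mul_sub_proj w y
  have hyw := hπ.sub_proj_mul_sub_proj y w
  rw [hw, sub_zero] at hwy hyw
  rw [← sub_eq_zero]
  calc _ = w * (y - π₀ y) - (y - π₀ y) * w := by rw [angleBracket]; noncomm_ring
    _ = 0 := by rw [hwy, hyw, sub_zero]

theorem commutator_angleBracket_self (hπ : IsSpecialGrading A₀ A₁ π₀) (x y : A) :
    angleBracket π₀ x x * y - y * angleBracket π₀ x x =
      angleBracket π₀ (angleBracket π₀ x x) y :=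
  hπ.commutator_eq_angleBracket_of_proj_eq_zero (by rw [hπ.proj_angleBracket, sub_self]) y

theorem hu_liu_four (hπ : IsSpecialGrading A₀ A₁ π₀) (x y z : A) :
    (angleBracket π₀ x y * z - z * angleBracket π₀ x y)
      + (z * (x * y - y * x) - (x * y - y * x) * z)
      + (z * angleBracket π₀ y x - angleBracket π₀ y x * z)
      + angleBracket π₀ z (angleBracket π₀ x y) = 0 := by
  have hxy := hπ.sub_proj_mul_sub_proj x y
  have hyx := hπ.sub_proj_mul_sub_proj y x
  simp only [angleBracket, map_sub, hπ.proj_mul, hπ.proj_proj]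
  calc _ = z * ((x - π₀ x) * (y - π₀ y) - (y - π₀ y) * (x - π₀ x))
        - ((x - π₀ x) * (y - π₀ y) - (y - π₀ y) * (x - π₀ x)) * z := by noncomm_ring
    _ = 0 := by rw [hxy, hyx]; simp

end IsSpecialGrading

def IsXiGroup (π₀ : A →ₗ[R] A) (G : Subgroup Aˣ) : Prop :=
  ∀ g ∈ G, ∀ h ∈ G, ∃ h' ∈ G, π₀ (g : A) * (h : A) * π₀ ((g⁻¹ : Aˣ) : A) = (h' : A)

theorem IsSpecialGrading.map_units_le_normalizer {A₀ A₁ : Submodule R A} {π₀ : A →ₗ[R] A}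
    {G : Subgroup Aˣ} (hπ : IsSpecialGrading A₀ A₁ π₀) (hG : IsXiGroup π₀ G) :
    G.map (Units.map hπ.projMonoidHom) ≤ Subgroup.normalizer (G : Set Aˣ) := by
  rw [Subgroup.le_normalizer_iff]
  rintro _ ⟨g, hg, rfl⟩ h hh
  obtain ⟨h', hh', e⟩ := hG g hg h hh
  convert hh'
  ext
  exact e

end SpecialGrading

theorem Submodule.mem_of_hasDerivAt {𝕜 F : Type*} [NontriviallyNormedField 𝕜]
    [NormedAddCommGroup F] [NormedSpace 𝕜 F] {S : Submodule 𝕜 F} (hS : IsClosed (S : Set F))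
    {c : 𝕜 → F} (hc : ∀ t, c t ∈ S) {L : F} {t₀ : 𝕜} (h : HasDerivAt c L t₀) : L ∈ S := by
  have hL := range_deriv_subset_closure_span_image c dense_univ ⟨t₀, h.deriv⟩
  rw [Set.image_univ] at hL
  exact hS.closure_subset_iff.2 (Submodule.span_le.2 (Set.range_subset_iff.2 hc)) hL

theorem HasDerivAt.conj_ringInverse {𝕜 A : Type*} [NontriviallyNormedField 𝕜] [NormedRing A]
    [NormedAlgebra 𝕜 A] [HasSummableGeomSeries A] {c : 𝕜 → A} {X : A} {t₀ : 𝕜}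
    (hc : HasDerivAt c X t₀) (hc₁ : c t₀ = 1) (Y : A) :
    HasDerivAt (fun t => c t * Y * Ring.inverse (c t)) (X * Y - Y * X) t₀ := by
  have hinv : HasDerivAt (fun t => Ring.inverse (c t)) (-X) t₀ := by
    have h := hasFDerivAt_ringInverse (𝕜 := 𝕜) (1 : Aˣ)
    rw [Units.val_one, ← hc₁] at h
    simpa [Function.comp_def] using h.comp_hasDerivAt t₀ hc
  refine ((hc.mul_const Y).mul hinv).congr_deriv ?_
  rw [hc₁, Ring.inverse_one]
  noncomm_ring

section TangentSpace

variable {A : Type*} [NormedRing A] [NormedAlgebra ℝ A] {G : Subgroup Aˣ} {X Y : A}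

variable (G) in
theorem zero_mem_tangentSpaceAtOne : (0 : A) ∈ tangentSpaceAtOne G :=
  ⟨fun _ => 1, fun _ => ⟨1, G.one_mem, rfl⟩, rfl, hasDerivAt_const 0 1⟩

theorem add_mem_tangentSpaceAtOne (hX : X ∈ tangentSpaceAtOne G)
    (hY : Y ∈ tangentSpaceAtOne G) : X + Y ∈ tangentSpaceAtOne G := by
  obtain ⟨a, haG, ha₀, haX⟩ := hX
  obtain ⟨b, hbG, hb₀, hbY⟩ := hY
  refine ⟨fun t => a t * b t, fun t => ?_, by simp [ha₀, hb₀], ?_⟩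
  · obtain ⟨g, hg, hag⟩ := haG t
    obtain ⟨h, hh, hbh⟩ := hbG t
    exact ⟨g * h, G.mul_mem hg hh, by simp only [hag, hbh, Units.val_mul]⟩
  · exact (haX.mul hbY).congr_deriv (by rw [ha₀, hb₀, mul_one, one_mul])

theorem smul_mem_tangentSpaceAtOne (r : ℝ) (hX : X ∈ tangentSpaceAtOne G) :
    r • X ∈ tangentSpaceAtOne G := by
  obtain ⟨a, haG, ha₀, haX⟩ := hX
  refine ⟨fun t => a (r * t), fun t => haG _, by simpa using ha₀, ?_⟩
  have hr : HasDerivAt (fun t : ℝ => r * t) r 0 := by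
    simpa using (hasDerivAt_id (0 : ℝ)).const_mul r
  exact (by simpa using haX : HasDerivAt a X (r * 0)).scomp 0 hr

variable (G) in
def tangentSpaceAtOneSubmodule : Submodule ℝ A where
  carrier := tangentSpaceAtOne G
  add_mem' := add_mem_tangentSpaceAtOne
  zero_mem' := zero_mem_tangentSpaceAtOne G
  smul_mem' r _ := smul_mem_tangentSpaceAtOne r

theorem conj_mem_tangentSpaceAtOne {u : Aˣ} (hu : u ∈ Subgroup.normalizer (G : Set Aˣ))
    (hX : X ∈ tangentSpaceAtOne G) : (u : A) * X * (u⁻¹ : Aˣ) ∈ tangentSpaceAtOne G := by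
  obtain ⟨a, haG, ha₀, haX⟩ := hX
  refine ⟨fun t => u * a t * (u⁻¹ : Aˣ), fun t => ?_, by simp [ha₀], ?_⟩
  · obtain ⟨g, hg, hag⟩ := haG t
    exact ⟨u * g * u⁻¹, (Subgroup.mem_normalizer_iff.1 hu g).1 hg, by simp [hag]⟩
  · exact (haX.const_mul _).mul_const _

theorem commutator_mem_tangentSpaceAtOne_of_hasDerivAt [FiniteDimensional ℝ A] {c : ℝ → A}
    (hc : ∀ t, ∃ u ∈ Subgroup.normalizer (G : Set Aˣ), c t = (u : A)) (hc₀ : c 0 = 1)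
    (hcX : HasDerivAt c X 0)
    (hY : Y ∈ tangentSpaceAtOne G) : X * Y - Y * X ∈ tangentSpaceAtOne G := by
  have := FiniteDimensional.complete ℝ A
  refine Submodule.mem_of_hasDerivAt (S := tangentSpaceAtOneSubmodule G)
    (Submodule.closed_of_finiteDimensional _) (fun t => ?_) (hcX.conj_ringInverse hc₀ Y)
  obtain ⟨u, hu, hcu⟩ := hc t
  rw [hcu, Ring.inverse_unit]
  exact conj_mem_tangentSpaceAtOne hu hY

theorem commutator_mem_tangentSpaceAtOne [FiniteDimensional ℝ A] (hX : X ∈ tangentSpaceAtOne G)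
    (hY : Y ∈ tangentSpaceAtOne G) : X * Y - Y * X ∈ tangentSpaceAtOne G := by
  obtain ⟨a, haG, ha₀, haX⟩ := hX
  refine commutator_mem_tangentSpaceAtOne_of_hasDerivAt (fun t => ?_) ha₀ haX hY
  obtain ⟨g, hg, hag⟩ := haG t
  exact ⟨g, G.le_normalizer hg, hag⟩

end TangentSpace

theorem IsSpecialGrading.angleBracket_mem_tangentSpaceAtOne {A : Type*} [NormedRing A]
    [NormedAlgebra ℝ A] [FiniteDimensional ℝ A] {A₀ A₁ : Submodule ℝ A} {π₀ : A →ₗ[ℝ] A}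
    {G : Subgroup Aˣ} {X Y : A} (hπ : IsSpecialGrading A₀ A₁ π₀) (hG : IsXiGroup π₀ G)
    (hX : X ∈ tangentSpaceAtOne G) (hY : Y ∈ tangentSpaceAtOne G) :
    angleBracket π₀ X Y ∈ tangentSpaceAtOne G := by
  obtain ⟨b, hbG, hb₀, hbY⟩ := hY
  have hπb : HasDerivAt (fun t => π₀ (b t)) (π₀ Y) 0 :=
    (LinearMap.toContinuousLinearMap π₀).hasFDerivAt.comp_hasDerivAt 0 hbY
  have hYX : π₀ Y * X - X * π₀ Y ∈ tangentSpaceAtOne G := by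
    refine commutator_mem_tangentSpaceAtOne_of_hasDerivAt (fun t => ?_)
      (by rw [hb₀, hπ.proj_one]) hπb hX
    obtain ⟨h, hh, hbh⟩ := hbG t
    exact ⟨Units.map hπ.projMonoidHom h, hπ.map_units_le_normalizer hG ⟨h, hh, rfl⟩,
      by rw [hbh]; rfl⟩
  rw [angleBracket, ← neg_sub]
  exact (tangentSpaceAtOneSubmodule G).neg_mem hYX

theorem tangentSpace_hu_liu_leibniz_general {A : Type*} [NormedRing A] [NormedAlgebra ℝ A]
    [FiniteDimensional ℝ A]
    (A₀ A₁ : Submodule ℝ A)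
    (hinf : A₀ ⊓ A₁ = ⊥)
    (h00 : ∀ a ∈ A₀, ∀ b ∈ A₀, a * b ∈ A₀)
    (h01 : ∀ a ∈ A₀, ∀ b ∈ A₁, a * b ∈ A₁)
    (h10 : ∀ a ∈ A₁, ∀ b ∈ A₀, a * b ∈ A₁)
    (h11 : ∀ a ∈ A₁, ∀ b ∈ A₁, a * b = 0)
    (π₀ : A →ₗ[ℝ] A)
    (hπmem : ∀ x : A, π₀ x ∈ A₀)
    (hπrest : ∀ x : A, x - π₀ x ∈ A₁)
    (G : Subgroup Aˣ)
    (hxi : ∀ g ∈ G, ∀ h ∈ G, ∃ h' ∈ G,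
      π₀ (g : A) * (h : A) * π₀ ((g⁻¹ : Aˣ) : A) = (h' : A))
    (angle square : A → A → A)
    (hangle : ∀ x y : A, angle x y = x * π₀ y - π₀ y * x)
    (hsquare : ∀ x y : A, square x y = x * y - y * x) :
    ((0 : A) ∈ tangentSpaceAtOne G)
    ∧ (∀ X ∈ tangentSpaceAtOne G, ∀ Y ∈ tangentSpaceAtOne G,
        X + Y ∈ tangentSpaceAtOne G)
    ∧ (∀ (lam : ℝ), ∀ X ∈ tangentSpaceAtOne G, lam • X ∈ tangentSpaceAtOne G)
    ∧ (∀ X ∈ tangentSpaceAtOne G, ∀ Y ∈ tangentSpaceAtOne G,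
        square X Y ∈ tangentSpaceAtOne G)
    ∧ (∀ X ∈ tangentSpaceAtOne G, ∀ Y ∈ tangentSpaceAtOne G,
        angle X Y ∈ tangentSpaceAtOne G)
    ∧ (∀ x ∈ tangentSpaceAtOne G, ∀ y ∈ tangentSpaceAtOne G, ∀ z ∈ tangentSpaceAtOne G,
        angle (angle x y) z = angle x (angle y z) + angle (angle x z) y)
    ∧ (∀ x ∈ tangentSpaceAtOne G, square x x = 0)
    ∧ (∀ x ∈ tangentSpaceAtOne G, ∀ y ∈ tangentSpaceAtOne G, ∀ z ∈ tangentSpaceAtOne G,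
        square (square x y) z + square (square y z) x + square (square z x) y = 0)
    ∧ (∀ x ∈ tangentSpaceAtOne G, ∀ y ∈ tangentSpaceAtOne G, ∀ z ∈ tangentSpaceAtOne G,
        angle x (square y z) = angle x (angle y z))
    ∧ (∀ x ∈ tangentSpaceAtOne G, ∀ y ∈ tangentSpaceAtOne G,
        square (angle x x) y = angle (angle x x) y)
    ∧ (∀ x ∈ tangentSpaceAtOne G, ∀ y ∈ tangentSpaceAtOne G, ∀ z ∈ tangentSpaceAtOne G,
        angle (square x y) z + square (angle y z) x + square y (angle x z) = 0)
    ∧ (∀ x ∈ tangentSpaceAtOne G, ∀ y ∈ tangentSpaceAtOne G, ∀ z ∈ tangentSpaceAtOne G,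
        square (angle x y) z + square z (square x y) + square z (angle y x)
          + angle z (angle x y) = 0) := by
  have hπ : IsSpecialGrading A₀ A₁ π₀ := ⟨hinf, h00, h01, h10, h11, hπmem, hπrest⟩
  obtain rfl : angle = angleBracket π₀ := funext₂ hangle
  obtain rfl : square = fun x y => x * y - y * x := funext₂ hsquare
  exact ⟨zero_mem_tangentSpaceAtOne G,
    fun X hX Y hY => add_mem_tangentSpaceAtOne hX hY,
    fun r X hX => smul_mem_tangentSpaceAtOne r hX,
    fun X hX Y hY => commutator_mem_tangentSpaceAtOne hX hY,
    fun X hX Y hY => hπ.angleBracket_mem_tangentSpaceAtOne hxi hX hY,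
    fun x _ y _ z _ => hπ.angleBracket_leibniz x y z,
    fun x _ => sub_self _,
    fun x _ y _ z _ => by noncomm_ring,
    fun x _ y _ z _ => hπ.angleBracket_commutator x y z,
    fun x _ y _ => hπ.commutator_angleBracket_self x y,
    fun x _ y _ z _ => hu_liu_three π₀ x y z,
    fun x _ y _ z _ => hπ.hu_liu_four x y z⟩

/-- Proposition 3.1: for a linear ξ-group G in a finite-dimensional special
ℤ₂-graded real Banach algebra, the tangent space T₁(G) is closed under the angle
bracket ⟨X,Y⟩ = X·π₀(Y) − π₀(Y)·X and the square bracket [X,Y] = XY − YX, and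
(T₁(G), +, ⟨·,·⟩, [·,·]) is a right Hu-Liu Leibniz algebra over ℝ. -/
theorem tangentSpace_hu_liu_leibniz {A : Type*} [NormedRing A] [NormedAlgebra ℝ A]
    [FiniteDimensional ℝ A]
    (A₀ A₁ : Submodule ℝ A)
    (hA₀closed : IsClosed (A₀ : Set A)) (hA₁closed : IsClosed (A₁ : Set A))
    (hsup : A₀ ⊔ A₁ = ⊤) (hinf : A₀ ⊓ A₁ = ⊥)
    (h00 : ∀ a ∈ A₀, ∀ b ∈ A₀, a * b ∈ A₀)
    (h01 : ∀ a ∈ A₀, ∀ b ∈ A₁, a * b ∈ A₁)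
    (h10 : ∀ a ∈ A₁, ∀ b ∈ A₀, a * b ∈ A₁)
    (h11 : ∀ a ∈ A₁, ∀ b ∈ A₁, a * b = 0)
    (π₀ : A →ₗ[ℝ] A)
    (hπmem : ∀ x : A, π₀ x ∈ A₀)
    (hπrest : ∀ x : A, x - π₀ x ∈ A₁)
    (G : Subgroup Aˣ)
    (hxi : ∀ g ∈ G, ∀ h ∈ G, ∃ h' ∈ G,
      π₀ (g : A) * (h : A) * π₀ ((g⁻¹ : Aˣ) : A) = (h' : A))
    (angle square : A → A → A)
    (hangle : ∀ x y : A, angle x y = x * π₀ y - π₀ y * x)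
    (hsquare : ∀ x y : A, square x y = x * y - y * x) :
    ((0 : A) ∈ tangentSpaceAtOne G)
    ∧ (∀ X ∈ tangentSpaceAtOne G, ∀ Y ∈ tangentSpaceAtOne G,
        X + Y ∈ tangentSpaceAtOne G)
    ∧ (∀ (lam : ℝ), ∀ X ∈ tangentSpaceAtOne G, lam • X ∈ tangentSpaceAtOne G)
    ∧ (∀ X ∈ tangentSpaceAtOne G, ∀ Y ∈ tangentSpaceAtOne G,
        square X Y ∈ tangentSpaceAtOne G)
    ∧ (∀ X ∈ tangentSpaceAtOne G, ∀ Y ∈ tangentSpaceAtOne G,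
        angle X Y ∈ tangentSpaceAtOne G)
    ∧ (∀ x ∈ tangentSpaceAtOne G, ∀ y ∈ tangentSpaceAtOne G, ∀ z ∈ tangentSpaceAtOne G,
        angle (angle x y) z = angle x (angle y z) + angle (angle x z) y)
    ∧ (∀ x ∈ tangentSpaceAtOne G, square x x = 0)
    ∧ (∀ x ∈ tangentSpaceAtOne G, ∀ y ∈ tangentSpaceAtOne G, ∀ z ∈ tangentSpaceAtOne G,
        square (square x y) z + square (square y z) x + square (square z x) y = 0)
    ∧ (∀ x ∈ tangentSpaceAtOne G, ∀ y ∈ tangentSpaceAtOne G, ∀ z ∈ tangentSpaceAtOne G,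
        angle x (square y z) = angle x (angle y z))
    ∧ (∀ x ∈ tangentSpaceAtOne G, ∀ y ∈ tangentSpaceAtOne G,
        square (angle x x) y = angle (angle x x) y)
    ∧ (∀ x ∈ tangentSpaceAtOne G, ∀ y ∈ tangentSpaceAtOne G, ∀ z ∈ tangentSpaceAtOne G,
        angle (square x y) z + square (angle y z) x + square y (angle x z) = 0)
    ∧ (∀ x ∈ tangentSpaceAtOne G, ∀ y ∈ tangentSpaceAtOne G, ∀ z ∈ tangentSpaceAtOne G,
        square (angle x y) z + square z (square x y) + square z (angle y x)
          + angle z (angle x y) = 0) :=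
  tangentSpace_hu_liu_leibniz_general A₀ A₁ hinf h00 h01 h10 h11 π₀ hπmem hπrest G hxi angle square
    hangle hsquare
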